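/- Let A be a non-degenerate evolution algebra with natural basis B = {e_i : i ∈ Λ}, and suppose A = ⊕_{γ ∈ Γ} I_γ is a direct sum of ideals I_γ. Then for each i ∈ Λ there is a unique γ with e_i ∈ I_γ, and there is a partition Λ = ⊔_{γ} Λ_γ such that I_γ = span{e_i : i ∈ Λ_γ} for every γ. -/

import Mathlib

/-!
Multiplication by a natural basis vector extracts one coordinate: `e j * x = x_j e_j²`.
Hence an ideal containing some `x` with `x_j ≠ 0` contains `e_j²`, which is nonzero by
non-degeneracy, so `e_j²` lies in exactly one summand `I_{c j}`. The same argument puts every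
`I_γ` inside `span {e_j : c j = γ}`; these spans are independent, so the decomposition
`A = ⊕ I_γ` forces equality by the modular law.
-/

open Function Module Submodule

namespace Module.Basis

theorem eq_span_image_preimage_of_le {K M ι Γ : Type*} [DivisionRing K] [AddCommGroup M]
    [Module K M] (e : Basis ι K M) {I : Γ → Submodule K M}
    (hspan : ⨆ γ, I γ = ⊤) {c : ι → Γ} (hle : ∀ γ, I γ ≤ span K (e '' (c ⁻¹' {γ})))
    (γ : Γ) : I γ = span K (e '' (c ⁻¹' {γ})) := by
  have hcodisj : Codisjoint (I γ) (⨆ (δ) (_ : δ ≠ γ), I δ) :=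
    codisjoint_iff.2 (iSup_split_single I γ ▸ hspan)
  have hrest : ⨆ (δ) (_ : δ ≠ γ), I δ ≤ span K (e '' (c ⁻¹' {γ})ᶜ) :=
    iSup₂_le fun δ hδ => (hle δ).trans <| span_mono <| Set.image_mono fun j hj =>
      fun hjγ => hδ (hj.symm.trans hjγ)
  exact (le_iff_eq_of_codisjoint_of_disjoint hcodisj
    ((e.linearIndependent.disjoint_span_image disjoint_compl_left).mono_left hrest)).1 (hle γ)

section Semiring

variable {K A ι : Type*} [CommSemiring K] [NonUnitalNonAssocSemiring A] [Module K A]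
  [SMulCommClass K A A] (e : Basis ι K A)

theorem mul_eq_repr_smul_mul_self (hnat : ∀ i j, i ≠ j → e i * e j = 0) (j : ι) (x : A) :
    e j * x = e.repr x j • (e j * e j) := by
  conv_lhs => rw [← e.linearCombination_repr x]
  rw [Finsupp.linearCombination_apply, Finsupp.sum, Finset.mul_sum,
    Finset.sum_eq_single j (fun i _ hij => by rw [mul_smul_comm, hnat j i hij.symm, smul_zero])
      (fun hj => by rw [Finsupp.notMem_support_iff.1 hj, zero_smul, mul_zero]),
    mul_smul_comm]

end Semiring

variable {K A ι : Type*} [Field K] [NonUnitalNonAssocCommSemiring A] [Module K A]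
  [SMulCommClass K A A] (e : Basis ι K A)

theorem mul_self_ne_zero (hnat : ∀ i j, i ≠ j → e i * e j = 0)
    (hnd : ∀ x : A, (∀ a : A, x * a = 0) → x = 0) (j : ι) :
    e j * e j ≠ 0 := fun h =>
  e.ne_zero j <| hnd _ fun a => by rw [e.mul_eq_repr_smul_mul_self hnat, h, smul_zero]

theorem mul_self_mem_of_repr_ne_zero (hnat : ∀ i j, i ≠ j → e i * e j = 0)
    {J : Submodule K A} (hJ : ∀ x ∈ J, ∀ a : A, x * a ∈ J)
    {x : A} (hx : x ∈ J) {j : ι} (hxj : e.repr x j ≠ 0) : e j * e j ∈ J := by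
  have h := hJ x hx (e j)
  rwa [mul_comm, e.mul_eq_repr_smul_mul_self hnat, smul_mem_iff _ hxj] at h

theorem exists_mul_self_mem (hnat : ∀ i j, i ≠ j → e i * e j = 0)
    {Γ : Type*} {I : Γ → Submodule K A}
    (hideal : ∀ γ, ∀ x ∈ I γ, ∀ a : A, x * a ∈ I γ) (hspan : ⨆ γ, I γ = ⊤) (j : ι) :
    ∃ γ, e j * e j ∈ I γ := by
  by_contra! h
  have hker : ∀ γ, I γ ≤ LinearMap.ker (e.coord j) := fun γ x hx =>
    not_not.1 fun hxj => h γ (e.mul_self_mem_of_repr_ne_zero hnat (hideal γ) hx hxj)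
  have hj : e j ∈ LinearMap.ker (e.coord j) := hspan ▸ iSup_le hker <| mem_top
  simp at hj

theorem le_span_image_preimage (hnat : ∀ i j, i ≠ j → e i * e j = 0)
    {Γ : Type*} {I : Γ → Submodule K A}
    (hnd : ∀ x : A, (∀ a : A, x * a = 0) → x = 0)
    (hideal : ∀ γ, ∀ x ∈ I γ, ∀ a : A, x * a ∈ I γ) (hdisj : Pairwise (Disjoint on I))
    {c : ι → Γ} (hc : ∀ j, e j * e j ∈ I (c j)) (γ : Γ) :
    I γ ≤ span K (e '' (c ⁻¹' {γ})) := by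
  intro x hx
  rw [e.mem_span_image]
  intro j hj
  by_contra hne
  exact e.mul_self_ne_zero hnat hnd j <| disjoint_def.1 (hdisj hne) _ (hc j)
    (e.mul_self_mem_of_repr_ne_zero hnat (hideal γ) hx (Finsupp.mem_support_iff.1 hj))

end Module.Basis

theorem direct_sum_decomposition_basis_general {K A : Type*} [Field K]
    [NonUnitalNonAssocCommRing A] [Module K A] [SMulCommClass K A A]
    {ι : Type*} (e : Module.Basis ι K A) (hnat : ∀ i j, i ≠ j → e i * e j = 0)
    (hnd : ∀ x : A, (∀ a : A, x * a = 0) → x = 0)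
    {Γ : Type*} (I : Γ → Submodule K A)
    (hideal : ∀ γ, ∀ x ∈ I γ, ∀ a : A, x * a ∈ I γ)
    (hindep : iSupIndep I)
    (hspan : ⨆ γ, I γ = ⊤) :
    (∀ i : ι, ∃! γ : Γ, e i ∈ I γ) ∧
    ∃ Λs : Γ → Set ι, Pairwise (Function.onFun Disjoint Λs) ∧
      (⋃ γ, Λs γ) = Set.univ ∧ ∀ γ, I γ = Submodule.span K (e '' Λs γ) := by
  choose c hc using e.exists_mul_self_mem hnat hideal hspan
  have hI : ∀ γ, I γ = span K (e '' (c ⁻¹' {γ})) := e.eq_span_image_preimage_of_le hspan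
    (e.le_span_image_preimage hnat hnd hideal hindep.pairwiseDisjoint hc)
  have hmem : ∀ i, e i ∈ I (c i) := fun i => (hI (c i)).symm ▸ subset_span ⟨i, rfl, rfl⟩
  refine ⟨fun i => ⟨c i, hmem i, fun γ hγ => ?_⟩, fun γ => c ⁻¹' {γ},
    pairwise_disjoint_fiber c, Set.iUnion_eq_univ_iff.2 fun i => ⟨c i, rfl⟩, hI⟩
  by_contra hne
  exact e.ne_zero i (disjoint_def.1 (hindep.pairwiseDisjoint hne) _ hγ (hmem i))

/-- If a non-degenerate evolution algebra decomposes as a direct sum of ideals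
`A = ⊕_γ I_γ`, then every natural basis element lies in exactly one summand, and there
is a partition `Λ = ⊔_γ Λ_γ` of the index set with `I_γ = span {e_i : i ∈ Λ_γ}`. -/
theorem direct_sum_decomposition_basis {K A : Type*} [Field K]
    [NonUnitalNonAssocCommRing A] [Module K A] [SMulCommClass K A A] [IsScalarTower K A A]
    {ι : Type*} (e : Module.Basis ι K A) (hnat : ∀ i j, i ≠ j → e i * e j = 0)
    (hnd : ∀ x : A, (∀ a : A, x * a = 0) → x = 0)
    {Γ : Type*} (I : Γ → Submodule K A)
    (hideal : ∀ γ, ∀ x ∈ I γ, ∀ a : A, x * a ∈ I γ)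
    (hindep : iSupIndep I)
    (hspan : ⨆ γ, I γ = ⊤) :
    (∀ i : ι, ∃! γ : Γ, e i ∈ I γ) ∧
    ∃ Λs : Γ → Set ι, Pairwise (Function.onFun Disjoint Λs) ∧
      (⋃ γ, Λs γ) = Set.univ ∧ ∀ γ, I γ = Submodule.span K (e '' Λs γ) :=
  direct_sum_decomposition_basis_general e hnat hnd I hideal hindep hspan
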